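/- arXiv:1009.5225 — 5 statements merged into one kernel-verified Lean document; each statement's English description precedes it below -/
import Mathlib

section
/- If f : I ⊆ ℝ → ℝ is twice differentiable on the interior of I, a, b ∈ I with a < b, m ∈ (0,1], a < m·b, and f'' is integrable on [a, mb], then (f(a)+f(mb))/2 − (1/(mb−a))·∫_a^{mb} f(x) dx = ((mb−a)²/2)·∫_0^1 (t − t²)·f''(t·a + m·(1−t)·b) dt. -/
/-!
Two integrations by parts against the weight `(x - a) * (c - x)`, which vanishes at both ends,
turn `∫_a^c (x - a) (c - x) f''` into `(c - a) (f a + f c) - 2 ∫_a^c f`; the affine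
substitution `x = t a + (1 - t) c` carries the weight to `(t - t²) (c - a)²`, and `c = m b`.
-/

open intervalIntegral MeasureTheory Set

theorem integral_sub_mul_sub_mul_eq_trapezoid {f f' f'' : ℝ → ℝ} {a c : ℝ}
    (hf : ∀ x ∈ uIcc a c, HasDerivAt f (f' x) x)
    (hf' : ∀ x ∈ uIcc a c, HasDerivAt f' (f'' x) x)
    (hint : IntervalIntegrable f'' volume a c) :
    ∫ x in a..c, (x - a) * (c - x) * f'' x = (c - a) * (f a + f c) - 2 * ∫ x in a..c, f x := by
  have hweight : ∀ x ∈ uIcc a c, HasDerivAt (fun x => (x - a) * (c - x)) (a + c - 2 * x) x :=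
    fun x _ => (((hasDerivAt_id' x).sub_const a).mul ((hasDerivAt_id' x).const_sub c)).congr_deriv
      (by ring)
  have hweight' : ∀ x ∈ uIcc a c, HasDerivAt (fun x => a + c - 2 * x) (-2) x :=
    fun x _ => (((hasDerivAt_id' x).const_mul 2).const_sub (a + c)).congr_deriv (by ring)
  have hf'_int : IntervalIntegrable f' volume a c :=
    ContinuousOn.intervalIntegrable fun x hx => (hf' x hx).continuousAt.continuousWithinAt
  have hparts₁ :
      ∫ x in a..c, (x - a) * (c - x) * f'' x = -∫ x in a..c, (a + c - 2 * x) * f' x := by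
    rw [intervalIntegral.integral_mul_deriv_eq_deriv_mul hweight hf'
      ((by fun_prop : Continuous fun x : ℝ => a + c - 2 * x).intervalIntegrable a c) hint]
    simp
  have hparts₂ : ∫ x in a..c, (a + c - 2 * x) * f' x
      = (a - c) * f c - (c - a) * f a + 2 * ∫ x in a..c, f x := by
    rw [intervalIntegral.integral_mul_deriv_eq_deriv_mul hweight' hf
      (continuous_const.intervalIntegrable a c) hf'_int, intervalIntegral.integral_const_mul]
    ring
  rw [hparts₁, hparts₂]
  ring

theorem integral_comp_convex_combination {E : Type*} [NormedAddCommGroup E] [NormedSpace ℝ E]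
    (g : ℝ → E) {a c : ℝ} (hac : a ≠ c) :
    ∫ t in (0 : ℝ)..1, g (t * a + (1 - t) * c) = (c - a)⁻¹ • ∫ x in a..c, g x := by
  have hrewrite : ∀ t : ℝ, t * a + (1 - t) * c = c - (c - a) * t := fun t => by ring
  simp only [hrewrite]
  rw [integral_comp_sub_mul g (sub_ne_zero.mpr hac.symm)]
  simp

theorem lemma_identity_general
    (f f' f'' : ℝ → ℝ) (a b m : ℝ)
    (hamb : a < m * b)
    (hf : ∀ x ∈ Set.Icc a (m * b), HasDerivAt f (f' x) x)
    (hf' : ∀ x ∈ Set.Icc a (m * b), HasDerivAt f' (f'' x) x)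
    (hint : IntervalIntegrable f'' MeasureTheory.volume a (m * b)) :
    (f a + f (m * b)) / 2 - (1 / (m * b - a)) * ∫ x in a..(m * b), f x
      = ((m * b - a) ^ 2 / 2) *
        ∫ t in (0:ℝ)..1, (t - t ^ 2) * f'' (t * a + m * (1 - t) * b) := by
  set c := m * b
  rw [← uIcc_of_le hamb.le] at hf hf'
  have hca : c - a ≠ 0 := sub_ne_zero.mpr hamb.ne'
  have hweight : ∀ t : ℝ, (t - t ^ 2) * f'' (t * a + m * (1 - t) * b)
      = ((c - a) ^ 2)⁻¹ * (fun x => (x - a) * (c - x) * f'' x) (t * a + (1 - t) * c) := by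
    intro t
    have hpoint : t * a + m * (1 - t) * b = t * a + (1 - t) * c := by ring
    rw [hpoint]
    field_simp
    ring
  rw [integral_congr fun t _ => hweight t, intervalIntegral.integral_const_mul,
    integral_comp_convex_combination (fun x => (x - a) * (c - x) * f'' x) hamb.ne, smul_eq_mul,
    integral_sub_mul_sub_mul_eq_trapezoid hf hf' hint]
  field_simp

theorem lemma_identity
    (f f' f'' : ℝ → ℝ) (a b m : ℝ) (hab : a < b) (hm : m ∈ Set.Ioc (0:ℝ) 1)
    (hamb : a < m * b)
    (hf : ∀ x ∈ Set.Icc a (m * b), HasDerivAt f (f' x) x)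
    (hf' : ∀ x ∈ Set.Icc a (m * b), HasDerivAt f' (f'' x) x)
    (hint : IntervalIntegrable f'' MeasureTheory.volume a (m * b)) :
    (f a + f (m * b)) / 2 - (1 / (m * b - a)) * ∫ x in a..(m * b), f x
      = ((m * b - a) ^ 2 / 2) *
        ∫ t in (0:ℝ)..1, (t - t ^ 2) * f'' (t * a + m * (1 - t) * b) :=
  lemma_identity_general f f' f'' a b m hamb hf hf' hint
end

section
/- Let f : [0, b*] → ℝ be twice differentiable on an open interval containing [a, mb], with 0 ≤ a < b ≤ b*, m ∈ (0,1], a < mb, and f'' integrable on [a, mb]. If |f''|^q is (α,m)-convex on [a,b] for some (α,m) ∈ [0,1]×(0,1] and q ≥ 1, then |(f(a)+f(mb))/2 − (1/(mb−a))∫_a^{mb} f(x)dx| ≤ ((mb−a)²/2)·(1/6)^{1−1/q}·[ |f''(a)|^q/((α+2)(α+3)) + m|f''(b)|^q·(1/6 − 1/((α+2)(α+3))) ]^{1/q}. -/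
/-!
Two integrations by parts give the trapezoid error as a weighted integral of `f''`:
`(f a + f c) / 2 - (1 / (c - a)) ∫ f = (1 / (2 (c - a))) ∫ (x - a) (c - x) f'' x`, with `c = m b`.
Hölder's inequality for the weight `w x = (x - a) (c - x)`, whose integral is `(c - a)³ / 6`, bounds
`∫ w |f''|` by `(∫ w) ^ (1 - 1/q) (∫ w |f''| ^ q) ^ (1/q)`. Writing `x = t a + m (1 - t) b` with
`t = (c - x) / (c - a)`, the `(α, m)`-convexity of `|f''| ^ q` bounds it pointwise by
`t ^ α |f'' a| ^ q + m (1 - t ^ α) |f'' b| ^ q`, and the weighted integral of this bound is explicit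
because `∫ w t ^ α = (c - a)³ / ((α + 2) (α + 3))`.
-/

open MeasureTheory Set Filter

theorem integral_sub_mul_sub_mul_deriv2 {f f' f'' : ℝ → ℝ} {a c : ℝ}
    (hf : ∀ x ∈ uIcc a c, HasDerivAt f (f' x) x) (hf' : ∀ x ∈ uIcc a c, HasDerivAt f' (f'' x) x)
    (hf'' : IntervalIntegrable f'' volume a c) :
    ∫ x in a..c, (x - a) * (c - x) * f'' x = (c - a) * (f a + f c) - 2 * ∫ x in a..c, f x := by
  have hw : ∀ x ∈ uIcc a c, HasDerivAt (fun x => (x - a) * (c - x)) (a + c - 2 * x) x := by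
    intro x _
    exact (((hasDerivAt_id' x).sub_const a).mul ((hasDerivAt_id' x).const_sub c)).congr_deriv
      (by ring)
  have hw' : ∀ x ∈ uIcc a c, HasDerivAt (fun x => a + c - 2 * x) (-2) x := by
    intro x _
    simpa using ((hasDerivAt_id x).const_mul 2).const_sub (a + c)
  have hf'i : IntervalIntegrable f' volume a c :=
    ContinuousOn.intervalIntegrable fun x hx => (hf' x hx).continuousAt.continuousWithinAt
  rw [intervalIntegral.integral_mul_deriv_eq_deriv_mul hw hf'
      (Continuous.intervalIntegrable (by fun_prop) a c) hf'',
    intervalIntegral.integral_mul_deriv_eq_deriv_mul hw' hf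
      intervalIntegrable_const hf'i,
    intervalIntegral.integral_const_mul]
  ring

theorem abs_trapezoid_error_le {f f' f'' : ℝ → ℝ} {a c : ℝ} (hac : a < c)
    (hf : ∀ x ∈ Icc a c, HasDerivAt f (f' x) x) (hf' : ∀ x ∈ Icc a c, HasDerivAt f' (f'' x) x)
    (hf'' : IntervalIntegrable f'' volume a c) :
    |(f a + f c) / 2 - 1 / (c - a) * ∫ x in a..c, f x|
      ≤ (∫ x in a..c, (x - a) * (c - x) * |f'' x|) / (2 * (c - a)) := by
  have hIcc : uIcc a c = Icc a c := uIcc_of_le hac.le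
  have hL : 0 < 2 * (c - a) := by linarith
  have herror : (f a + f c) / 2 - 1 / (c - a) * ∫ x in a..c, f x
      = (∫ x in a..c, (x - a) * (c - x) * f'' x) / (2 * (c - a)) := by
    rw [integral_sub_mul_sub_mul_deriv2 (hIcc ▸ hf) (hIcc ▸ hf') hf'']
    field_simp [show c - a ≠ 0 by linarith]
  rw [herror, abs_div, abs_of_pos hL]
  gcongr
  refine (intervalIntegral.abs_integral_le_integral_abs hac.le).trans_eq <|
    intervalIntegral.integral_congr fun x hx => ?_
  rw [hIcc] at hx
  rw [abs_mul, abs_of_nonneg (mul_nonneg (sub_nonneg.2 hx.1) (sub_nonneg.2 hx.2))]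

theorem integral_sub_mul_sub_mul_rpow {a c : ℝ} (α : ℝ) (hac : a ≤ c) (hα : -1 < α) :
    ∫ x in a..c, (x - a) * (c - x) ^ (α + 1)
      = (c - a) ^ (α + 3) / ((α + 2) * (α + 3)) := by
  set L := c - a
  have hL : 0 ≤ L := sub_nonneg.2 hac
  have hsub := intervalIntegral.integral_comp_sub_left (a := a) (b := c)
    (fun u => (L - u) * u ^ (α + 1)) c
  simp only [sub_self, show ∀ x, L - (c - x) = x - a from fun x => by ring] at hsub
  have hsplit : ∀ u ∈ uIcc 0 L, (L - u) * u ^ (α + 1) = L * u ^ (α + 1) - u ^ (α + 2) := by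
    intro u hu
    rw [uIcc_of_le hL] at hu
    have : u ^ (α + 2) = u ^ (α + 1) * u := by
      rw [← Real.rpow_add_one' hu.1 (by linarith)]; congr 1; ring
    rw [this, sub_mul, mul_comm u]
  have hint : ∀ β : ℝ, -1 < β → IntervalIntegrable (fun u : ℝ => u ^ β) volume 0 L :=
    fun β hβ => intervalIntegral.intervalIntegrable_rpow' hβ
  have hL3 : L ^ (α + 3) = L ^ (α + 2) * L := by
    rw [← Real.rpow_add_one' hL (by linarith)]; congr 1; ring
  rw [hsub, intervalIntegral.integral_congr hsplit, intervalIntegral.integral_sub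
    ((hint _ (by linarith)).const_mul L) (hint _ (by linarith)),
    intervalIntegral.integral_const_mul, integral_rpow (Or.inl (by linarith)),
    integral_rpow (Or.inl (by linarith)), Real.zero_rpow (by linarith),
    Real.zero_rpow (by linarith), show α + 2 + 1 = α + 3 by ring, show α + 1 + 1 = α + 2 by ring, hL3]
  field_simp [show α + 2 ≠ 0 by linarith, show α + 3 ≠ 0 by linarith]
  ring

theorem integral_mul_le_integral_rpow_mul_integral_mul_rpow {X : Type*} [MeasurableSpace X]
    {μ : Measure X} {w g : X → ℝ} {q : ℝ} (hq : 1 ≤ q) (hw : 0 ≤ᵐ[μ] w) (hg : 0 ≤ᵐ[μ] g)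
    (hwi : Integrable w μ) (hgm : AEStronglyMeasurable g μ)
    (hwgi : Integrable (fun x => w x * g x ^ q) μ) :
    ∫ x, w x * g x ∂μ ≤ (∫ x, w x ∂μ) ^ (1 - 1 / q) * (∫ x, w x * g x ^ q ∂μ) ^ (1 / q) := by
  rcases hq.eq_or_lt with rfl | hq
  · simp
  set p := q.conjExponent
  have hpq : p.HolderConjugate q := (Real.HolderConjugate.conjExponent hq).symm
  have hp : 1 / p = 1 - 1 / q := by
    rw [eq_sub_iff_add_eq, one_div, one_div]; exact hpq.inv_add_inv_eq_one
  have memLp_of_rpow {F h : X → ℝ} {r : ℝ} (hr : 0 < r) (hFm : AEStronglyMeasurable F μ)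
      (hF : 0 ≤ᵐ[μ] F) (hFh : (fun x => F x ^ r) =ᵐ[μ] h) (hh : Integrable h μ) :
      MemLp F (ENNReal.ofReal r) μ := by
    refine (integrable_norm_rpow_iff hFm (by simpa using hr) ENNReal.ofReal_ne_top).1 ?_
    refine hh.congr ?_
    filter_upwards [hF, hFh] with x hx hxh
    rw [ENNReal.toReal_ofReal hr.le, Real.norm_of_nonneg hx, hxh]
  have hF : 0 ≤ᵐ[μ] fun x => w x ^ (1 / p) := hw.mono fun x hx => Real.rpow_nonneg hx _
  have hG : 0 ≤ᵐ[μ] fun x => w x ^ (1 / q) * g x := by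
    filter_upwards [hw, hg] with x hwx hgx using mul_nonneg (Real.rpow_nonneg hwx _) hgx
  have hFp : (fun x => (w x ^ (1 / p)) ^ p) =ᵐ[μ] w := by
    filter_upwards [hw] with x hx
    rw [← Real.rpow_mul hx, one_div_mul_cancel hpq.ne_zero, Real.rpow_one]
  have hGq : (fun x => (w x ^ (1 / q) * g x) ^ q) =ᵐ[μ] fun x => w x * g x ^ q := by
    filter_upwards [hw, hg] with x hwx hgx
    rw [Real.mul_rpow (Real.rpow_nonneg hwx _) hgx, ← Real.rpow_mul hwx,
      one_div_mul_cancel hpq.symm.ne_zero, Real.rpow_one]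
  have hFG : (fun x => w x ^ (1 / p) * (w x ^ (1 / q) * g x)) =ᵐ[μ] fun x => w x * g x := by
    filter_upwards [hw] with x hx
    rw [← mul_assoc, ← Real.rpow_add' hx (by rw [hp]; norm_num), hp, sub_add_cancel,
      Real.rpow_one]
  have hwm := hwi.aemeasurable
  have holder := integral_mul_le_Lp_mul_Lq_of_nonneg hpq hF hG
    (memLp_of_rpow hpq.pos (hwm.pow_const _).aestronglyMeasurable hF hFp hwi)
    (memLp_of_rpow hpq.symm.pos ((hwm.pow_const _).aestronglyMeasurable.mul hgm) hG hGq hwgi)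
  rwa [integral_congr_ae hFG, integral_congr_ae hFp, integral_congr_ae hGq, hp] at holder

theorem integral_sub_mul_sub_mul_le_rpow_integral {a c q : ℝ} {g : ℝ → ℝ} (hac : a ≤ c) (hq : 1 ≤ q)
    (hg : AEStronglyMeasurable g (volume.restrict (Ioc a c)))
    (hgq : IntervalIntegrable (fun x => (x - a) * (c - x) * g x ^ q) volume a c)
    (hg0 : ∀ x ∈ Ioc a c, 0 ≤ g x) :
    ∫ x in a..c, (x - a) * (c - x) * g x
      ≤ ((c - a) ^ 3 / 6) ^ (1 - 1 / q) * (∫ x in a..c, (x - a) * (c - x) * g x ^ q) ^ (1 / q) := by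
  have hw : ∫ x in a..c, (x - a) * (c - x) = (c - a) ^ 3 / 6 := by
    simpa [Real.rpow_ofNat, show (2 : ℝ) * 3 = 6 by norm_num]
      using integral_sub_mul_sub_mul_rpow 0 hac (by norm_num)
  have hw0 : ∀ᵐ x ∂volume.restrict (Ioc a c), 0 ≤ (x - a) * (c - x) :=
    (ae_restrict_iff' measurableSet_Ioc).2 <| .of_forall fun x hx =>
      mul_nonneg (sub_nonneg.2 hx.1.le) (sub_nonneg.2 hx.2)
  have hg0' : ∀ᵐ x ∂volume.restrict (Ioc a c), 0 ≤ g x :=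
    (ae_restrict_iff' measurableSet_Ioc).2 <| .of_forall hg0
  rw [← hw]
  simp only [intervalIntegral.integral_of_le hac]
  exact integral_mul_le_integral_rpow_mul_integral_mul_rpow hq hw0 hg0'
    (Continuous.intervalIntegrable (by fun_prop) a c).1 hg hgq.1

def AlphaMConvexOn (α m : ℝ) (s : Set ℝ) (g : ℝ → ℝ) : Prop :=
  ∀ x ∈ s, ∀ y ∈ s, ∀ t ∈ Icc (0 : ℝ) 1,
    g (t * x + m * (1 - t) * y) ≤ t ^ α * g x + m * (1 - t ^ α) * g y

theorem AlphaMConvexOn.le_of_mem_Icc {α m : ℝ} {s : Set ℝ} {g : ℝ → ℝ} {a b x : ℝ}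
    (hg : AlphaMConvexOn α m s g) (ha : a ∈ s) (hb : b ∈ s) (hamb : a < m * b)
    (hx : x ∈ Icc a (m * b)) :
    g x ≤ ((m * b - x) / (m * b - a)) ^ α * g a
      + m * (1 - ((m * b - x) / (m * b - a)) ^ α) * g b := by
  have hpos : 0 < m * b - a := sub_pos.2 hamb
  set t := (m * b - x) / (m * b - a)
  have hxt : t * a + m * (1 - t) * b = x := by
    simp only [t]; field_simp; ring
  have ht : t ∈ Icc (0 : ℝ) 1 :=
    ⟨div_nonneg (by linarith [hx.2]) hpos.le, (div_le_one hpos).2 (by linarith [hx.1])⟩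
  simpa only [hxt] using hg a ha b hb t ht

theorem integral_weight_mul_alphaM_bound {a c : ℝ} (α m A B : ℝ) (hac : a < c) (hα : -1 < α) :
    ∫ x in a..c, (x - a) * (c - x) *
        (((c - x) / (c - a)) ^ α * A + m * (1 - ((c - x) / (c - a)) ^ α) * B)
      = (c - a) ^ 3 * (A / ((α + 2) * (α + 3)) + m * B * (1 / 6 - 1 / ((α + 2) * (α + 3)))) := by
  have hL : 0 < c - a := sub_pos.2 hac
  have hLα : (c - a) ^ α ≠ 0 := (Real.rpow_pos_of_pos hL α).ne'
  have hsplit : ∀ x ∈ uIcc a c, (x - a) * (c - x) *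
      (((c - x) / (c - a)) ^ α * A + m * (1 - ((c - x) / (c - a)) ^ α) * B)
      = (A - m * B) / (c - a) ^ α * ((x - a) * (c - x) ^ (α + 1))
        + m * B * ((x - a) * (c - x) ^ ((0 : ℝ) + 1)) := by
    intro x hx
    rw [uIcc_of_le hac.le] at hx
    have hcx : 0 ≤ c - x := sub_nonneg.2 hx.2
    rw [Real.div_rpow hcx hL.le, Real.rpow_add_one' hcx (by linarith), zero_add, Real.rpow_one]
    field_simp
    ring
  have hint : ∀ β : ℝ, -1 < β →
      IntervalIntegrable (fun x => (x - a) * (c - x) ^ (β + 1)) volume a c := fun β hβ =>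
    (ContinuousOn.mul (by fun_prop)
      (ContinuousOn.rpow_const (by fun_prop) fun _ _ => Or.inr (by linarith))).intervalIntegrable
  rw [intervalIntegral.integral_congr hsplit, intervalIntegral.integral_add
    ((hint α hα).const_mul _) ((hint 0 (by norm_num)).const_mul _),
    intervalIntegral.integral_const_mul, intervalIntegral.integral_const_mul,
    integral_sub_mul_sub_mul_rpow α hac.le hα, integral_sub_mul_sub_mul_rpow 0 hac.le (by norm_num),
    Real.rpow_add hL, zero_add, Real.rpow_ofNat]
  field_simp [show α + 2 ≠ 0 by linarith, show α + 3 ≠ 0 by linarith]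
  ring

theorem intervalIntegrable_weight_mul_alphaM_bound {a c α : ℝ} (m A B : ℝ) (hα : 0 ≤ α) :
    IntervalIntegrable (fun x => (x - a) * (c - x) *
      (((c - x) / (c - a)) ^ α * A + m * (1 - ((c - x) / (c - a)) ^ α) * B)) volume a c := by
  have := ContinuousOn.rpow_const (s := uIcc a c) (f := fun x => (c - x) / (c - a))
    (by fun_prop) fun _ _ => Or.inr hα
  exact ContinuousOn.intervalIntegrable (by fun_prop)

section AlphaMConvexOn

variable {α m a b : ℝ} {s : Set ℝ} {φ : ℝ → ℝ}

theorem AlphaMConvexOn.weight_mul_le (hφ : AlphaMConvexOn α m s φ) (ha : a ∈ s) (hb : b ∈ s)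
    (hamb : a < m * b) {x : ℝ} (hx : x ∈ Icc a (m * b)) :
    (x - a) * (m * b - x) * φ x ≤ (x - a) * (m * b - x) *
      (((m * b - x) / (m * b - a)) ^ α * φ a + m * (1 - ((m * b - x) / (m * b - a)) ^ α) * φ b) :=
  mul_le_mul_of_nonneg_left (hφ.le_of_mem_Icc ha hb hamb hx)
    (mul_nonneg (sub_nonneg.2 hx.1) (sub_nonneg.2 hx.2))

theorem AlphaMConvexOn.intervalIntegrable_weight_mul (hφ : AlphaMConvexOn α m s φ) (ha : a ∈ s)
    (hb : b ∈ s) (hamb : a < m * b) (hα : 0 ≤ α)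
    (hφm : AEStronglyMeasurable φ (volume.restrict (Ioc a (m * b))))
    (hφ0 : ∀ x ∈ Ioc a (m * b), 0 ≤ φ x) :
    IntervalIntegrable (fun x => (x - a) * (m * b - x) * φ x) volume a (m * b) := by
  refine ⟨Integrable.mono' (intervalIntegrable_weight_mul_alphaM_bound m (φ a) (φ b) hα).1 ?_
    ((ae_restrict_iff' measurableSet_Ioc).2 <| .of_forall fun x hx => ?_), by simp [hamb.le]⟩
  · exact (Continuous.aestronglyMeasurable (by fun_prop)).mul hφm
  · have hx' := Ioc_subset_Icc_self hx
    rw [Real.norm_of_nonneg (mul_nonneg (mul_nonneg (sub_nonneg.2 hx'.1) (sub_nonneg.2 hx'.2))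
      (hφ0 x hx))]
    exact hφ.weight_mul_le ha hb hamb hx'

theorem AlphaMConvexOn.integral_weight_mul_le (hφ : AlphaMConvexOn α m s φ) (ha : a ∈ s)
    (hb : b ∈ s) (hamb : a < m * b) (hα : 0 ≤ α)
    (hφm : AEStronglyMeasurable φ (volume.restrict (Ioc a (m * b))))
    (hφ0 : ∀ x ∈ Ioc a (m * b), 0 ≤ φ x) :
    ∫ x in a..(m * b), (x - a) * (m * b - x) * φ x ≤ (m * b - a) ^ 3 *
      (φ a / ((α + 2) * (α + 3)) + m * φ b * (1 / 6 - 1 / ((α + 2) * (α + 3)))) := by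
  rw [← integral_weight_mul_alphaM_bound α m _ _ hamb (by linarith)]
  refine intervalIntegral.integral_mono_on hamb.le
    (hφ.intervalIntegrable_weight_mul ha hb hamb hα hφm hφ0)
    (intervalIntegrable_weight_mul_alphaM_bound m _ _ hα) fun x hx =>
      hφ.weight_mul_le ha hb hamb hx

end AlphaMConvexOn

theorem rpow_one_sub_mul_rpow_of_mul {x y z s : ℝ} (hx : 0 ≤ x) (hy : 0 ≤ y) (hz : 0 ≤ z) :
    (x * y) ^ (1 - s) * (x * z) ^ s = x * (y ^ (1 - s) * z ^ s) := by
  rw [Real.mul_rpow hx hy, Real.mul_rpow hx hz]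
  calc x ^ (1 - s) * y ^ (1 - s) * (x ^ s * z ^ s)
      = x ^ (1 - s + s) * (y ^ (1 - s) * z ^ s) := by
        rw [Real.rpow_add' hx (by norm_num)]; ring
    _ = x * (y ^ (1 - s) * z ^ s) := by rw [sub_add_cancel, Real.rpow_one]

theorem thm21_general
    (f f' f'' : ℝ → ℝ) (a b m α q : ℝ)
    (hab : a < b) (hα : α ∈ Set.Icc (0:ℝ) 1)
    (hamb : a < m * b) (hq : 1 ≤ q)
    (hf : ∀ x ∈ Set.Icc a (m * b), HasDerivAt f (f' x) x)
    (hf' : ∀ x ∈ Set.Icc a (m * b), HasDerivAt f' (f'' x) x)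
    (hint : IntervalIntegrable f'' MeasureTheory.volume a (m * b))
    (hconv : ∀ x ∈ Set.Icc a b, ∀ y ∈ Set.Icc a b, ∀ t ∈ Set.Icc (0:ℝ) 1,
      |f'' (t * x + m * (1 - t) * y)| ^ q
        ≤ t ^ α * |f'' x| ^ q + m * (1 - t ^ α) * |f'' y| ^ q) :
    |(f a + f (m * b)) / 2 - (1 / (m * b - a)) * ∫ x in a..(m * b), f x|
      ≤ ((m * b - a) ^ 2 / 2) * (1 / 6 : ℝ) ^ (1 - 1 / q) *
        (|f'' a| ^ q / ((α + 2) * (α + 3))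
          + m * |f'' b| ^ q * (1 / 6 - 1 / ((α + 2) * (α + 3)))) ^ (1 / q) := by
  have hconv' : AlphaMConvexOn α m (Icc a b) fun x => |f'' x| ^ q := hconv
  have hmeas : AEStronglyMeasurable (fun x => |f'' x|) (volume.restrict (Ioc a (m * b))) :=
    hint.1.aestronglyMeasurable.norm
  have hmeas_q := (hmeas.aemeasurable.pow_const q).aestronglyMeasurable
  have hendpoints : a ∈ Icc a b ∧ b ∈ Icc a b := ⟨⟨le_rfl, hab.le⟩, ⟨hab.le, le_rfl⟩⟩
  have hmoment := hconv'.integral_weight_mul_le hendpoints.1 hendpoints.2 hamb hα.1 hmeas_q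
    fun x _ => by positivity
  set K := |f'' a| ^ q / ((α + 2) * (α + 3)) + m * |f'' b| ^ q * (1 / 6 - 1 / ((α + 2) * (α + 3)))
  set L := m * b - a
  have hL : 0 < L := sub_pos.2 hamb
  have hmoment0 : 0 ≤ ∫ x in a..(m * b), (x - a) * (m * b - x) * |f'' x| ^ q :=
    intervalIntegral.integral_nonneg hamb.le fun x hx =>
      mul_nonneg (mul_nonneg (sub_nonneg.2 hx.1) (sub_nonneg.2 hx.2)) (by positivity)
  have hK : 0 ≤ K := nonneg_of_mul_nonneg_right (hmoment0.trans hmoment) (by positivity)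
  have hholder := integral_sub_mul_sub_mul_le_rpow_integral hamb.le hq hmeas
    (hconv'.intervalIntegrable_weight_mul hendpoints.1 hendpoints.2 hamb hα.1 hmeas_q
      fun x _ => by positivity) fun x _ => abs_nonneg (f'' x)
  calc _ ≤ (∫ x in a..(m * b), (x - a) * (m * b - x) * |f'' x|) / (2 * L) :=
        abs_trapezoid_error_le hamb hf hf' hint
    _ ≤ ((L ^ 3 * (1 / 6)) ^ (1 - 1 / q) * (L ^ 3 * K) ^ (1 / q)) / (2 * L) := by
        rw [← div_eq_mul_one_div]
        gcongr
        exact hholder.trans (by gcongr)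
    _ = _ := by
        rw [rpow_one_sub_mul_rpow_of_mul (by positivity) (by norm_num) hK]
        field_simp

theorem thm21
    (f f' f'' : ℝ → ℝ) (a b bstar m α q : ℝ)
    (hb : b ≤ bstar) (hbstar : 0 < bstar)
    (ha : 0 ≤ a) (hab : a < b) (hm : m ∈ Set.Ioc (0:ℝ) 1) (hα : α ∈ Set.Icc (0:ℝ) 1)
    (hamb : a < m * b) (hq : 1 ≤ q)
    (hf : ∀ x ∈ Set.Icc a (m * b), HasDerivAt f (f' x) x)
    (hf' : ∀ x ∈ Set.Icc a (m * b), HasDerivAt f' (f'' x) x)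
    (hint : IntervalIntegrable f'' MeasureTheory.volume a (m * b))
    (hconv : ∀ x ∈ Set.Icc a b, ∀ y ∈ Set.Icc a b, ∀ t ∈ Set.Icc (0:ℝ) 1,
      |f'' (t * x + m * (1 - t) * y)| ^ q
        ≤ t ^ α * |f'' x| ^ q + m * (1 - t ^ α) * |f'' y| ^ q) :
    |(f a + f (m * b)) / 2 - (1 / (m * b - a)) * ∫ x in a..(m * b), f x|
      ≤ ((m * b - a) ^ 2 / 2) * (1 / 6 : ℝ) ^ (1 - 1 / q) *
        (|f'' a| ^ q / ((α + 2) * (α + 3))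
          + m * |f'' b| ^ q * (1 / 6 - 1 / ((α + 2) * (α + 3)))) ^ (1 / q) :=
  thm21_general f f' f'' a b m α q hab hα hamb hq hf hf' hint hconv
end

section
/- Let f : [a,b] → ℝ be twice differentiable with f'' integrable, a < b. If |f''| is convex on [a,b], then |(f(a)+f(b))/2 − (1/(b−a))∫_a^b f(x)dx| ≤ ((b−a)²/24)·(|f''(a)| + |f''(b)|). -/
/-!
Integrating by parts twice against the kernel `(x - a) * (b - x)`, which vanishes at both
endpoints, turns the trapezoid error `(b - a) * (f a + f b) - 2 * ∫ f` into `∫ (x - a) * (b - x) * f''`.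
Convexity bounds `|f''|` by its secant through `|f'' a|` and `|f'' b|`, and integrating the kernel
against that secant gives `(b - a) ^ 3 * (|f'' a| + |f'' b|) / 12`.
-/

open MeasureTheory Set

theorem integral_sub_mul_sub_mul_second_deriv {f f' f'' : ℝ → ℝ} {a b : ℝ}
    (hf : ∀ x ∈ uIcc a b, HasDerivAt f (f' x) x)
    (hf' : ∀ x ∈ uIcc a b, HasDerivAt f' (f'' x) x)
    (hint : IntervalIntegrable f'' volume a b) :
    ∫ x in a..b, (x - a) * (b - x) * f'' x = (b - a) * (f a + f b) - 2 * ∫ x in a..b, f x := by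
  have hint' : IntervalIntegrable f' volume a b :=
    ContinuousOn.intervalIntegrable fun x hx => (hf' x hx).continuousAt.continuousWithinAt
  have hkernel : ∀ x ∈ uIcc a b, HasDerivAt (fun x => (x - a) * (b - x)) (a + b - 2 * x) x :=
    fun x _ => (((hasDerivAt_id' x).sub_const a).mul ((hasDerivAt_id' x).const_sub b)).congr_deriv
      (by ring)
  have hlinear : ∀ x ∈ uIcc a b, HasDerivAt (fun x => a + b - 2 * x) (-2) x :=
    fun x _ => by simpa using ((hasDerivAt_id x).const_mul 2).const_sub (a + b)
  rw [intervalIntegral.integral_mul_deriv_eq_deriv_mul hkernel hf'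
      (Continuous.intervalIntegrable (by fun_prop) a b) hint,
    intervalIntegral.integral_mul_deriv_eq_deriv_mul hlinear hf
      (Continuous.intervalIntegrable (by fun_prop) a b) hint',
    intervalIntegral.integral_const_mul]
  ring

theorem le_secant_of_le_convex_combination {g : ℝ → ℝ} {a b x : ℝ} (hab : a < b)
    (hx : x ∈ Icc a b)
    (hg : ∀ t ∈ Icc (0 : ℝ) 1, g (t * a + (1 - t) * b) ≤ t * g a + (1 - t) * g b) :
    g x ≤ ((b - x) * g a + (x - a) * g b) / (b - a) := by
  have hba : b - a ≠ 0 := (sub_pos.2 hab).ne'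
  have ht : (b - x) / (b - a) ∈ Icc (0 : ℝ) 1 :=
    ⟨div_nonneg (by linarith [hx.2]) (by linarith),
      div_le_one_of_le₀ (by linarith [hx.1]) (by linarith)⟩
  convert hg _ ht using 1
  · congr 1; field_simp; ring
  · field_simp; ring

theorem integral_sub_mul_sub_mul_secant (a b A B : ℝ) :
    ∫ x in a..b, (x - a) * (b - x) * ((b - x) * A + (x - a) * B) = (b - a) ^ 4 * (A + B) / 12 := by
  have hshift := intervalIntegral.integral_comp_sub_right
    (fun u => u * (b - a - u) * ((b - a - u) * A + u * B)) a (a := a) (b := b)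
  simp only [sub_sub_sub_cancel_right, sub_self] at hshift
  -- `u ^ 1` rather than `u`, so that `integral_pow` evaluates every term
  have hexpand : ∀ u : ℝ, u * (b - a - u) * ((b - a - u) * A + u * B)
      = (b - a) ^ 2 * A * u ^ 1 + (b - a) * (B - 2 * A) * u ^ 2 + (A - B) * u ^ 3 :=
    fun u => by ring
  rw [hshift]
  simp only [hexpand]
  rw [intervalIntegral.integral_add, intervalIntegral.integral_add]
  · simp only [intervalIntegral.integral_const_mul, integral_pow]
    ring
  all_goals exact Continuous.intervalIntegrable (by fun_prop) _ _

theorem abs_integral_sub_mul_sub_mul_le_of_abs_le_secant {g : ℝ → ℝ} {a b A B : ℝ} (hab : a < b)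
    (hg : IntervalIntegrable g volume a b)
    (hsecant : ∀ x ∈ Icc a b, |g x| ≤ ((b - x) * A + (x - a) * B) / (b - a)) :
    |∫ x in a..b, (x - a) * (b - x) * g x| ≤ (b - a) ^ 3 * (A + B) / 12 := by
  have hba : 0 < b - a := sub_pos.2 hab
  calc |∫ x in a..b, (x - a) * (b - x) * g x|
      ≤ ∫ x in a..b, |(x - a) * (b - x) * g x| :=
        intervalIntegral.abs_integral_le_integral_abs hab.le
    _ ≤ ∫ x in a..b, (x - a) * (b - x) * ((b - x) * A + (x - a) * B) / (b - a) := by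
        refine intervalIntegral.integral_mono_on hab.le (hg.continuousOn_mul (by fun_prop)).abs
          (Continuous.intervalIntegrable (by fun_prop) a b) fun x hx => ?_
        have hkernel : 0 ≤ (x - a) * (b - x) := mul_nonneg (by linarith [hx.1]) (by linarith [hx.2])
        rw [abs_mul, abs_of_nonneg hkernel, mul_div_assoc]
        exact mul_le_mul_of_nonneg_left (hsecant x hx) hkernel
    _ = (b - a) ^ 3 * (A + B) / 12 := by
        rw [intervalIntegral.integral_div, integral_sub_mul_sub_mul_secant]
        field_simp

theorem hh_second_deriv_convex
    (f f' f'' : ℝ → ℝ) (a b : ℝ) (hab : a < b)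
    (hf : ∀ x ∈ Set.Icc a b, HasDerivAt f (f' x) x)
    (hf' : ∀ x ∈ Set.Icc a b, HasDerivAt f' (f'' x) x)
    (hint : IntervalIntegrable f'' MeasureTheory.volume a b)
    (hconv : ∀ x ∈ Set.Icc a b, ∀ y ∈ Set.Icc a b, ∀ t ∈ Set.Icc (0:ℝ) 1,
      |f'' (t * x + (1 - t) * y)| ≤ t * |f'' x| + (1 - t) * |f'' y|) :
    |(f a + f b) / 2 - (1 / (b - a)) * ∫ x in a..b, f x|
      ≤ ((b - a) ^ 2 / 24) * (|f'' a| + |f'' b|) := by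
  have hba : 0 < b - a := sub_pos.2 hab
  have hsecant : ∀ x ∈ Icc a b, |f'' x| ≤ ((b - x) * |f'' a| + (x - a) * |f'' b|) / (b - a) :=
    fun x hx => le_secant_of_le_convex_combination (g := fun x => |f'' x|) hab hx
      (hconv a (left_mem_Icc.2 hab.le) b (right_mem_Icc.2 hab.le))
  have hbound := abs_integral_sub_mul_sub_mul_le_of_abs_le_secant hab hint hsecant
  rw [integral_sub_mul_sub_mul_second_deriv (uIcc_of_le hab.le ▸ hf) (uIcc_of_le hab.le ▸ hf') hint]
    at hbound
  have htrapezoid : (f a + f b) / 2 - (1 / (b - a)) * ∫ x in a..b, f x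
      = ((b - a) * (f a + f b) - 2 * ∫ x in a..b, f x) / (2 * (b - a)) := by
    field_simp
  have htwice : 0 < 2 * (b - a) := by positivity
  rw [htrapezoid, abs_div, abs_of_pos htwice, div_le_iff₀ htwice]
  exact hbound.trans_eq (by ring)
end

section
/- Let f : [0, b*] → ℝ be twice differentiable on an open interval containing [a, mb], 0 ≤ a < b ≤ b*, m ∈ (0,1], a < mb, f'' integrable on [a, mb]. If |f''|^q is (α,m)-convex on [a,b] for (α,m) ∈ [0,1]×(0,1] and q > 1, then |(f(a)+f(mb))/2 − (1/(mb−a))∫_a^{mb} f(x)dx| ≤ ((mb−a)²/2)·( |f''(a)|^q·B(α+1, q+1) + m|f''(b)|^q·(1/(q+1) − B(α+1, q+1)) )^{1/q}, where B is the Beta function. -/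
/-!
The trapezoid error equals `(mb - a)² / 2 · ∫₀¹ t (1 - t) f''(t a + (1 - t) m b) dt`, since
`(x - a)(b - x) f' + (2x - a - b) f` is an antiderivative of `2 f + (x - a)(b - x) f''`.
The `(α, m)`-convexity of `|f''|^q` bounds `|f''(t a + (1 - t) m b)|` by `ψ(t)^(1/q)` with
`ψ(t) = t^α |f''(a)|^q + m (1 - t^α) |f''(b)|^q`. Hölder's inequality for the factors `t` and
`(1 - t) ψ(t)^(1/q)`, together with `(∫₀¹ t^p)^(1/p) = (p + 1)^(-1/p) ≤ 1`, leaves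
`(∫₀¹ (1 - t)^q ψ(t) dt)^(1/q)`, and this integral is a combination of `B(α + 1, q + 1)` and
`∫₀¹ (1 - t)^q = 1 / (q + 1)`.
-/

noncomputable def betaFn (x y : ℝ) : ℝ := ∫ t in (0:ℝ)..1, t ^ (x - 1) * (1 - t) ^ (y - 1)

open MeasureTheory Set intervalIntegral

theorem two_mul_integral_add_integral_mul_secondDeriv_eq {f f' f'' : ℝ → ℝ} {a b : ℝ}
    (hf : ∀ x ∈ uIcc a b, HasDerivAt f (f' x) x)
    (hf' : ∀ x ∈ uIcc a b, HasDerivAt f' (f'' x) x)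
    (hint : IntervalIntegrable f'' volume a b) :
    2 * (∫ x in a..b, f x) + ∫ x in a..b, (x - a) * (b - x) * f'' x = (b - a) * (f a + f b) := by
  have hK : ∀ x ∈ uIcc a b, HasDerivAt
      (fun x => (x - a) * (b - x) * f' x + (2 * x - a - b) * f x)
      (2 * f x + (x - a) * (b - x) * f'' x) x := by
    intro x hx
    have hw : HasDerivAt (fun x => (x - a) * (b - x)) (a + b - 2 * x) x :=
      (((hasDerivAt_id' x).sub_const a).mul ((hasDerivAt_id' x).const_sub b)).congr_deriv
        (by ring)
    have hl := (((hasDerivAt_id' x).const_mul 2).sub_const a).sub_const b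
    exact ((hw.mul (hf' x hx)).add (hl.mul (hf x hx))).congr_deriv (by ring)
  have hfc : ContinuousOn f (uIcc a b) := fun x hx => (hf x hx).continuousAt.continuousWithinAt
  have hwf'' : IntervalIntegrable (fun x => (x - a) * (b - x) * f'' x) volume a b :=
    hint.continuousOn_mul (by fun_prop)
  rw [← intervalIntegral.integral_const_mul,
    ← integral_add (hfc.intervalIntegrable.const_mul 2) hwf'',
    integral_eq_sub_of_hasDerivAt hK ((hfc.intervalIntegrable.const_mul 2).add hwf'')]
  ring

theorem trapezoid_error_eq_integral_unitInterval {f f' f'' : ℝ → ℝ} {a b : ℝ} (hab : a ≠ b)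
    (hf : ∀ x ∈ uIcc a b, HasDerivAt f (f' x) x)
    (hf' : ∀ x ∈ uIcc a b, HasDerivAt f' (f'' x) x)
    (hint : IntervalIntegrable f'' volume a b) :
    (f a + f b) / 2 - 1 / (b - a) * ∫ x in a..b, f x
      = (b - a) ^ 2 / 2 * ∫ t in (0:ℝ)..1, t * (1 - t) * f'' (t * a + (1 - t) * b) := by
  have hba : b - a ≠ 0 := sub_ne_zero.2 hab.symm
  have hsubst : ∫ x in a..b, (x - a) * (b - x) * f'' x
      = (b - a) ^ 3 * ∫ t in (0:ℝ)..1, t * (1 - t) * f'' (t * a + (1 - t) * b) := by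
    have h := smul_integral_comp_mul_add (a := 0) (b := 1)
      (fun x => (x - a) * (b - x) * f'' x) (a - b) b
    simp only [mul_zero, zero_add, mul_one, sub_add_cancel, smul_eq_mul] at h
    rw [integral_symm, ← h, ← intervalIntegral.integral_const_mul,
      ← intervalIntegral.integral_const_mul, ← intervalIntegral.integral_neg]
    refine integral_congr fun t _ => ?_
    rw [show t * a + (1 - t) * b = (a - b) * t + b by ring]
    ring
  have hid := two_mul_integral_add_integral_mul_secondDeriv_eq hf hf' hint
  rw [hsubst] at hid
  generalize ∫ t in (0:ℝ)..1, t * (1 - t) * f'' (t * a + (1 - t) * b) = T at hid ⊢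
  field_simp
  linear_combination -hid

theorem ContinuousOn.memLp_restrict_Ioc {g : ℝ → ℝ} {a b : ℝ} (hg : ContinuousOn g (Icc a b))
    (p : ENNReal) : MemLp g p (volume.restrict (Ioc a b)) := by
  obtain ⟨C, hC⟩ := isCompact_Icc.exists_bound_of_continuousOn hg
  exact MemLp.of_bound ((hg.mono Ioc_subset_Icc_self).aestronglyMeasurable measurableSet_Ioc) C
    ((ae_restrict_iff' measurableSet_Ioc).2 (.of_forall fun t ht => hC t (Ioc_subset_Icc_self ht)))

theorem integral_rpow_unitInterval {r : ℝ} (hr : -1 < r) : ∫ t in (0:ℝ)..1, t ^ r = 1 / (r + 1) := by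
  rw [integral_rpow (.inl hr), Real.one_rpow, Real.zero_rpow (by linarith : r + 1 ≠ 0), sub_zero]

theorem integral_one_sub_rpow_unitInterval {r : ℝ} (hr : -1 < r) :
    ∫ t in (0:ℝ)..1, (1 - t) ^ r = 1 / (r + 1) := by
  rw [integral_comp_sub_left (fun t : ℝ => t ^ r) 1, sub_self, sub_zero]
  exact integral_rpow_unitInterval hr

theorem integral_id_mul_le_rpow_integral {g : ℝ → ℝ} {q : ℝ} (hq : 1 < q)
    (hg : ContinuousOn g (Icc 0 1)) (hg0 : ∀ t ∈ Icc (0:ℝ) 1, 0 ≤ g t) :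
    ∫ t in (0:ℝ)..1, t * g t ≤ (∫ t in (0:ℝ)..1, g t ^ q) ^ (1 / q) := by
  set p := q.conjExponent
  have hpq : p.HolderConjugate q := (Real.HolderConjugate.conjExponent hq).symm
  have hp : 0 < p := hpq.pos
  have hmem : ∀ᵐ t ∂volume.restrict (Ioc (0:ℝ) 1), t ∈ Icc (0:ℝ) 1 :=
    (ae_restrict_iff' measurableSet_Ioc).2 (.of_forall fun t ht => Ioc_subset_Icc_self ht)
  have hholder := integral_mul_le_Lp_mul_Lq_of_nonneg hpq
    (hmem.mono fun t ht => ht.1) (hmem.mono fun t ht => hg0 t ht)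
    (continuousOn_id.memLp_restrict_Ioc _) (hg.memLp_restrict_Ioc _)
  have hp_moment : (∫ t in Ioc (0:ℝ) 1, t ^ p) ^ (1 / p) ≤ 1 := by
    rw [← integral_of_le zero_le_one, integral_rpow_unitInterval (by linarith)]
    exact Real.rpow_le_one (by positivity) (div_le_one_of_le₀ (by linarith) (by linarith))
      (by positivity)
  rw [integral_of_le zero_le_one, integral_of_le zero_le_one]
  exact hholder.trans (mul_le_of_le_one_left (Real.rpow_nonneg (setIntegral_nonneg
    measurableSet_Ioc fun t ht => Real.rpow_nonneg (hg0 t (Ioc_subset_Icc_self ht)) q) _) hp_moment)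

theorem integral_one_sub_rpow_mul_convexBound {α q A C m : ℝ} (hα : -1 < α) (hq : 0 ≤ q) :
    ∫ t in (0:ℝ)..1, (1 - t) ^ q * (t ^ α * A + m * (1 - t ^ α) * C)
      = A * betaFn (α + 1) (q + 1) + m * C * (1 / (q + 1) - betaFn (α + 1) (q + 1)) := by
  have hcq : ContinuousOn (fun t : ℝ => (1 - t) ^ q) (uIcc 0 1) :=
    (continuousOn_const.sub continuousOn_id).rpow_const fun _ _ => .inr hq
  have hbeta : IntervalIntegrable (fun t : ℝ => t ^ α * (1 - t) ^ q) volume 0 1 :=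
    (intervalIntegrable_rpow' hα).mul_continuousOn hcq
  have hbeta_eq : ∫ t in (0:ℝ)..1, t ^ α * (1 - t) ^ q = betaFn (α + 1) (q + 1) := by
    simp only [betaFn, add_sub_cancel_right]
  have hsplit : ∀ t : ℝ, (1 - t) ^ q * (t ^ α * A + m * (1 - t ^ α) * C)
      = A * (t ^ α * (1 - t) ^ q) + (m * C * (1 - t) ^ q - m * C * (t ^ α * (1 - t) ^ q)) :=
    fun t => by ring
  simp only [hsplit]
  rw [integral_add (hbeta.const_mul A) ((hcq.intervalIntegrable.const_mul _).sub
      (hbeta.const_mul _)), integral_sub (hcq.intervalIntegrable.const_mul _) (hbeta.const_mul _),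
    intervalIntegral.integral_const_mul, intervalIntegral.integral_const_mul,
    intervalIntegral.integral_const_mul, hbeta_eq, integral_one_sub_rpow_unitInterval (by linarith)]
  ring

theorem abs_integral_mul_one_sub_mul_le {h ψ : ℝ → ℝ} {q : ℝ} (hq : 1 < q)
    (hψ : ContinuousOn ψ (Icc 0 1)) (hhψ : ∀ t ∈ Icc (0:ℝ) 1, |h t| ^ q ≤ ψ t) :
    |∫ t in (0:ℝ)..1, t * (1 - t) * h t| ≤ (∫ t in (0:ℝ)..1, (1 - t) ^ q * ψ t) ^ (1 / q) := by
  have hq0 : 0 < q := by linarith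
  have hψ0 : ∀ t ∈ Icc (0:ℝ) 1, 0 ≤ ψ t := fun t ht =>
    (Real.rpow_nonneg (abs_nonneg _) q).trans (hhψ t ht)
  have hg : ContinuousOn (fun t => (1 - t) * ψ t ^ (1 / q)) (Icc 0 1) :=
    (continuousOn_const.sub continuousOn_id).mul (hψ.rpow_const fun _ _ => .inr (by positivity))
  have hpointwise : ∀ t ∈ Ioc (0:ℝ) 1, ‖t * (1 - t) * h t‖ ≤ t * ((1 - t) * ψ t ^ (1 / q)) := by
    intro t ht
    have ht0 : 0 ≤ t := ht.1.le
    have h1t : 0 ≤ 1 - t := sub_nonneg.2 ht.2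
    have hh : |h t| ≤ ψ t ^ (1 / q) := by
      rw [one_div, Real.le_rpow_inv_iff_of_pos (abs_nonneg _) (hψ0 t (Ioc_subset_Icc_self ht)) hq0]
      exact hhψ t (Ioc_subset_Icc_self ht)
    rw [Real.norm_eq_abs, abs_mul, abs_of_nonneg (mul_nonneg ht0 h1t), mul_assoc]
    exact mul_le_mul_of_nonneg_left (mul_le_mul_of_nonneg_left hh h1t) ht0
  have hmajorant : IntervalIntegrable (fun t => t * ((1 - t) * ψ t ^ (1 / q))) volume 0 1 :=
    (continuousOn_id.mul hg).intervalIntegrable_of_Icc zero_le_one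
  rw [← Real.norm_eq_abs]
  calc _ ≤ ∫ t in (0:ℝ)..1, t * ((1 - t) * ψ t ^ (1 / q)) :=
        norm_integral_le_of_norm_le zero_le_one (.of_forall hpointwise) hmajorant
    _ ≤ (∫ t in (0:ℝ)..1, ((1 - t) * ψ t ^ (1 / q)) ^ q) ^ (1 / q) :=
        integral_id_mul_le_rpow_integral hq hg fun t ht =>
          mul_nonneg (sub_nonneg.2 ht.2) (Real.rpow_nonneg (hψ0 t ht) _)
    _ = (∫ t in (0:ℝ)..1, (1 - t) ^ q * ψ t) ^ (1 / q) := by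
        congr 1
        refine integral_congr fun t ht => ?_
        rw [uIcc_of_le zero_le_one] at ht
        rw [Real.mul_rpow (sub_nonneg.2 ht.2) (Real.rpow_nonneg (hψ0 t ht) _),
          ← Real.rpow_mul (hψ0 t ht), one_div_mul_cancel hq0.ne', Real.rpow_one]

theorem thm23_general
    (f f' f'' : ℝ → ℝ) (a b m α q : ℝ)
    (hab : a < b) (hα : α ∈ Set.Icc (0:ℝ) 1)
    (hamb : a < m * b) (hq : 1 < q)
    (hf : ∀ x ∈ Set.Icc a (m * b), HasDerivAt f (f' x) x)
    (hf' : ∀ x ∈ Set.Icc a (m * b), HasDerivAt f' (f'' x) x)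
    (hint : IntervalIntegrable f'' MeasureTheory.volume a (m * b))
    (hconv : ∀ x ∈ Set.Icc a b, ∀ y ∈ Set.Icc a b, ∀ t ∈ Set.Icc (0:ℝ) 1,
      |f'' (t * x + m * (1 - t) * y)| ^ q
        ≤ t ^ α * |f'' x| ^ q + m * (1 - t ^ α) * |f'' y| ^ q) :
    |(f a + f (m * b)) / 2 - (1 / (m * b - a)) * ∫ x in a..(m * b), f x|
      ≤ ((m * b - a) ^ 2 / 2) *
        (|f'' a| ^ q * betaFn (α + 1) (q + 1)
          + m * |f'' b| ^ q * (1 / (q + 1) - betaFn (α + 1) (q + 1))) ^ (1 / q) := by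
  obtain ⟨hα0, -⟩ := hα
  set ψ : ℝ → ℝ := fun t => t ^ α * |f'' a| ^ q + m * (1 - t ^ α) * |f'' b| ^ q
  have hψ : Continuous ψ := by fun_prop (disch := assumption)
  have hconv_ab : ∀ t ∈ Icc (0:ℝ) 1, |f'' (t * a + (1 - t) * (m * b))| ^ q ≤ ψ t := fun t ht => by
    simpa only [show t * a + m * (1 - t) * b = t * a + (1 - t) * (m * b) by ring]
      using hconv a ⟨le_rfl, hab.le⟩ b ⟨hab.le, le_rfl⟩ t ht
  rw [← uIcc_of_le hamb.le] at hf hf'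
  rw [trapezoid_error_eq_integral_unitInterval hamb.ne hf hf' hint, abs_mul,
    abs_of_nonneg (by positivity),
    ← integral_one_sub_rpow_mul_convexBound (by linarith) (by linarith)]
  gcongr
  exact abs_integral_mul_one_sub_mul_le hq hψ.continuousOn hconv_ab

theorem thm23
    (f f' f'' : ℝ → ℝ) (a b bstar m α q : ℝ)
    (hb : b ≤ bstar) (hbstar : 0 < bstar)
    (ha : 0 ≤ a) (hab : a < b) (hm : m ∈ Set.Ioc (0:ℝ) 1) (hα : α ∈ Set.Icc (0:ℝ) 1)
    (hamb : a < m * b) (hq : 1 < q)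
    (hf : ∀ x ∈ Set.Icc a (m * b), HasDerivAt f (f' x) x)
    (hf' : ∀ x ∈ Set.Icc a (m * b), HasDerivAt f' (f'' x) x)
    (hint : IntervalIntegrable f'' MeasureTheory.volume a (m * b))
    (hconv : ∀ x ∈ Set.Icc a b, ∀ y ∈ Set.Icc a b, ∀ t ∈ Set.Icc (0:ℝ) 1,
      |f'' (t * x + m * (1 - t) * y)| ^ q
        ≤ t ^ α * |f'' x| ^ q + m * (1 - t ^ α) * |f'' y| ^ q) :
    |(f a + f (m * b)) / 2 - (1 / (m * b - a)) * ∫ x in a..(m * b), f x|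
      ≤ ((m * b - a) ^ 2 / 2) *
        (|f'' a| ^ q * betaFn (α + 1) (q + 1)
          + m * |f'' b| ^ q * (1 / (q + 1) - betaFn (α + 1) (q + 1))) ^ (1 / q) :=
  thm23_general f f' f'' a b m α q hab hα hamb hq hf hf' hint hconv
end

section
/- Let f be twice differentiable on an open interval containing [a,b], a < b, with f'' integrable and |f''| ≤ K on [a,b], and suppose |f''|^q is convex for some q > 1 with conjugate exponent p. Then |(f(a)+f(b))/2 − (1/(b−a))∫_a^b f(x)dx| ≤ K·((b−a)²/8)·(Γ(1+p)/Γ(3/2+p))^{1/p}. -/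
/-!
The classical trapezoidal-rule bound already gives `K (b - a)² / 12`, so it suffices that the
Gamma factor is at least `2 / 3`. Log-convexity of `Γ` gives `Γ (s + 1/2) ≤ √s Γ s`, hence
`Γ (1 + p) / Γ (3/2 + p) ≥ (1 + p) ^ (-1/2) ≥ (2/3) ^ p` for `p ≥ 1`, by Bernoulli's inequality.
-/

open Set Real

section TrapezoidalRule

variable {f f' f'' : ℝ → ℝ} {a b K : ℝ}

theorem hasDerivWithinAt_derivWithin_Icc (hab : a < b)
    (hf : ∀ x ∈ Icc a b, HasDerivAt f (f' x) x) (hf' : ∀ x ∈ Icc a b, HasDerivAt f' (f'' x) x)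
    {x : ℝ} (hx : x ∈ Icc a b) :
    HasDerivWithinAt (derivWithin f (Icc a b)) (f'' x) (Icc a b) x := by
  have hderiv : EqOn (derivWithin f (Icc a b)) f' (Icc a b) := fun y hy =>
    (hf y hy).hasDerivWithinAt.derivWithin (uniqueDiffOn_Icc hab y hy)
  exact (hf' x hx).hasDerivWithinAt.congr hderiv (hderiv hx)

theorem abs_iteratedDerivWithin_two_Icc_le (hab : a < b)
    (hf : ∀ x ∈ Icc a b, HasDerivAt f (f' x) x) (hf' : ∀ x ∈ Icc a b, HasDerivAt f' (f'' x) x)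
    (hK : ∀ x ∈ Icc a b, |f'' x| ≤ K) (x : ℝ) :
    |iteratedDerivWithin 2 f (Icc a b) x| ≤ K := by
  rw [iteratedDerivWithin_succ, iteratedDerivWithin_one]
  by_cases hx : x ∈ Icc a b
  · rw [(hasDerivWithinAt_derivWithin_Icc hab hf hf' hx).derivWithin (uniqueDiffOn_Icc hab x hx)]
    exact hK x hx
  · rw [derivWithin_zero_of_notMem_closure (by rwa [closure_Icc]), abs_zero]
    exact (abs_nonneg _).trans (hK a (left_mem_Icc.2 hab.le))

theorem abs_trapezoidal_mean_error_le (hab : a < b)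
    (hf : ∀ x ∈ Icc a b, HasDerivAt f (f' x) x) (hf' : ∀ x ∈ Icc a b, HasDerivAt f' (f'' x) x)
    (hK : ∀ x ∈ Icc a b, |f'' x| ≤ K) :
    |(f a + f b) / 2 - (1 / (b - a)) * ∫ x in a..b, f x| ≤ K * (b - a) ^ 2 / 12 := by
  have hba : 0 < b - a := sub_pos.2 hab
  have herror : |trapezoidal_error f 1 a b| ≤ |b - a| ^ 3 * K / (12 * ((1 : ℕ) : ℝ) ^ 2) := by
    refine trapezoidal_error_le ?_ ?_ ?_ one_pos <;> rw [uIcc_of_le hab.le]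
    · exact fun x hx => (hf x hx).differentiableAt.differentiableWithinAt
    · exact fun x hx => (hasDerivWithinAt_derivWithin_Icc hab hf hf' hx).differentiableWithinAt
    · exact abs_iteratedDerivWithin_two_Icc_le hab hf hf' hK
  have hmean : (f a + f b) / 2 - (1 / (b - a)) * ∫ x in a..b, f x
      = trapezoidal_error f 1 a b / (b - a) := by
    rw [trapezoidal_error, trapezoidal_integral_one]
    field_simp
  rw [abs_of_pos hba] at herror
  rw [hmean, abs_div, abs_of_pos hba, div_le_iff₀ hba]
  linarith

end TrapezoidalRule

theorem Real.Gamma_add_half_le_sqrt_mul_Gamma {s : ℝ} (hs : 0 < s) :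
    Gamma (s + 1 / 2) ≤ √s * Gamma s := by
  have hG : 0 < Gamma s := Gamma_pos_of_pos hs
  calc Gamma (s + 1 / 2) = Gamma (1 / 2 * s + 1 / 2 * (s + 1)) := by ring_nf
    _ ≤ Gamma s ^ (1 / 2 : ℝ) * Gamma (s + 1) ^ (1 / 2 : ℝ) :=
      Gamma_mul_add_mul_le_rpow_Gamma_mul_rpow_Gamma hs (by positivity) (by norm_num)
        (by norm_num) (by norm_num)
    _ = √s * Gamma s := by
      rw [← sqrt_eq_rpow, ← sqrt_eq_rpow, ← sqrt_mul hG.le, Gamma_add_one hs.ne',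
        show Gamma s * (s * Gamma s) = s * (Gamma s * Gamma s) by ring, sqrt_mul hs.le,
        sqrt_mul_self hG.le]

theorem sqrt_one_add_le_rpow_three_halves {p : ℝ} (hp : 1 ≤ p) : √(1 + p) ≤ (3 / 2) ^ p := by
  have hbernoulli : 1 + p * (5 / 4) ≤ (1 + 5 / 4 : ℝ) ^ p :=
    one_add_mul_self_le_rpow_one_add (by norm_num) hp
  rw [sqrt_le_iff, ← rpow_natCast, ← rpow_mul (by norm_num), mul_comm, rpow_mul (by norm_num)]
  refine ⟨by positivity, ?_⟩
  norm_num at hbernoulli ⊢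
  linarith

theorem two_thirds_le_rpow_Gamma_div_Gamma {p : ℝ} (hp : 1 ≤ p) :
    2 / 3 ≤ (Gamma (1 + p) / Gamma (3 / 2 + p)) ^ (1 / p) := by
  have hratio : (2 / 3 : ℝ) ^ p ≤ Gamma (1 + p) / Gamma (3 / 2 + p) :=
    calc (2 / 3 : ℝ) ^ p = ((3 / 2) ^ p)⁻¹ := by rw [← inv_rpow (by norm_num), inv_div]
      _ ≤ (√(1 + p))⁻¹ := inv_anti₀ (by positivity) (sqrt_one_add_le_rpow_three_halves hp)
      _ ≤ Gamma (1 + p) / Gamma (3 / 2 + p) := by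
        rw [le_div_iff₀ (Gamma_pos_of_pos (by linarith)), inv_mul_le_iff₀ (by positivity),
          show (3 / 2 : ℝ) + p = 1 + p + 1 / 2 by ring]
        exact Gamma_add_half_le_sqrt_mul_Gamma (by linarith)
  calc (2 / 3 : ℝ) = ((2 / 3 : ℝ) ^ p) ^ (1 / p) := by
        rw [← rpow_mul (by norm_num), mul_one_div_cancel (by positivity), rpow_one]
    _ ≤ _ := rpow_le_rpow (by positivity) hratio (by positivity)

theorem cor_bounded_second_deriv_general
    (f f' f'' : ℝ → ℝ) (a b K p q : ℝ) (hab : a < b)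
    (hq : 1 < q) (hpq : 1 / p + 1 / q = 1)
    (hf : ∀ x ∈ Set.Icc a b, HasDerivAt f (f' x) x)
    (hf' : ∀ x ∈ Set.Icc a b, HasDerivAt f' (f'' x) x)
    (hK : ∀ x ∈ Set.Icc a b, |f'' x| ≤ K) :
    |(f a + f b) / 2 - (1 / (b - a)) * ∫ x in a..b, f x|
      ≤ K * ((b - a) ^ 2 / 8) * (Real.Gamma (1 + p) / Real.Gamma (3 / 2 + p)) ^ (1 / p) := by
  have hp : 1 < p := (holderConjugate_iff.2 ⟨hq, by simpa [add_comm] using hpq⟩).symm.lt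
  have hK0 : 0 ≤ K := (abs_nonneg _).trans (hK a (left_mem_Icc.2 hab.le))
  calc |(f a + f b) / 2 - (1 / (b - a)) * ∫ x in a..b, f x|
      ≤ K * (b - a) ^ 2 / 12 := abs_trapezoidal_mean_error_le hab hf hf' hK
    _ = K * ((b - a) ^ 2 / 8) * (2 / 3) := by ring
    _ ≤ K * ((b - a) ^ 2 / 8) * (Real.Gamma (1 + p) / Real.Gamma (3 / 2 + p)) ^ (1 / p) := by
      gcongr
      exact two_thirds_le_rpow_Gamma_div_Gamma hp.le

theorem cor_bounded_second_deriv
    (f f' f'' : ℝ → ℝ) (a b K p q : ℝ) (hab : a < b)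
    (hq : 1 < q) (hpq : 1 / p + 1 / q = 1)
    (hf : ∀ x ∈ Set.Icc a b, HasDerivAt f (f' x) x)
    (hf' : ∀ x ∈ Set.Icc a b, HasDerivAt f' (f'' x) x)
    (hint : IntervalIntegrable f'' MeasureTheory.volume a b)
    (hK : ∀ x ∈ Set.Icc a b, |f'' x| ≤ K)
    (hconv : ∀ x ∈ Set.Icc a b, ∀ y ∈ Set.Icc a b, ∀ t ∈ Set.Icc (0:ℝ) 1,
      |f'' (t * x + (1 - t) * y)| ^ q ≤ t * |f'' x| ^ q + (1 - t) * |f'' y| ^ q) :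
    |(f a + f b) / 2 - (1 / (b - a)) * ∫ x in a..b, f x|
      ≤ K * ((b - a) ^ 2 / 8) * (Real.Gamma (1 + p) / Real.Gamma (3 / 2 + p)) ^ (1 / p) :=
  cor_bounded_second_deriv_general f f' f'' a b K p q hab hq hpq hf hf' hK
end
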